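/- Fix 0 < c < p and λ > 0, k ≥ 1. The function u(w) = λ·(ln(p/w))^{1/k}·(w - c) on (c, p) attains its maximum at a unique point w* ∈ (c, p). -/

import Mathlib

/-!
Writing `L w = log (p / w)`, the derivative of `u` factors as
`u' w = λ L(w)^(1/k - 1) (L w - (w - c) / (k w))`. The second factor equals
`log p - log w - 1/k + c / (k w)`, hence is strictly decreasing; it is `log (p / c) > 0` at `c` and
`-(p - c) / (k p) < 0` at `p`. Its unique zero `w*` splits `[c, p]` into a part where `u` strictly
increases and one where it strictly decreases.
-/

open Real Set

theorem isMaxOn_and_unique_of_forall_ne_lt {α β : Type*} [Preorder β] {f : α → β}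
    {s : Set α} {m : α} (hm : m ∈ s) (hlt : ∀ w ∈ s, w ≠ m → f w < f m) :
    IsMaxOn f s m ∧ ∀ w ∈ s, IsMaxOn f s w → w = m := by
  refine ⟨fun w hw ↦ ?_, fun w hw hmax ↦ ?_⟩
  · rcases eq_or_ne w m with rfl | hne
    exacts [le_rfl, (hlt w hw hne).le]
  · by_contra hne
    exact (hlt w hw hne).not_ge (hmax hm)

theorem lt_of_strictMonoOn_Icc_of_strictAntiOn_Icc {α β : Type*} [LinearOrder α] [Preorder β]
    {f : α → β} {a b m : α} (hmono : StrictMonoOn f (Icc a m))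
    (hanti : StrictAntiOn f (Icc m b))
    {w : α} (hw : w ∈ Icc a b) (hne : w ≠ m) : f w < f m := by
  rcases hne.lt_or_gt with hwm | hmw
  · exact hmono ⟨hw.1, hwm.le⟩ ⟨hw.1.trans hwm.le, le_rfl⟩ hwm
  · exact hanti ⟨le_rfl, hmw.le.trans hw.2⟩ ⟨hmw.le, hw.2⟩ hmw

theorem exists_strictMonoOn_strictAntiOn_of_hasDerivAt_mul {f g h : ℝ → ℝ} {a b : ℝ}
    (hab : a ≤ b) (hf : ContinuousOn f (Icc a b))
    (hf' : ∀ x ∈ Ioo a b, HasDerivAt f (g x * h x) x) (hg : ∀ x ∈ Ioo a b, 0 < g x)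
    (hh : ContinuousOn h (Icc a b)) (hh_anti : StrictAntiOn h (Icc a b))
    (ha : 0 < h a) (hb : h b < 0) :
    ∃ m ∈ Ioo a b, StrictMonoOn f (Icc a m) ∧ StrictAntiOn f (Icc m b) := by
  obtain ⟨m, hm, hm0⟩ := intermediate_value_Ioo' hab hh ⟨hb, ha⟩
  have hf'_within {s : Set ℝ} (hs : s ⊆ Ioo a b) :
      ∀ x ∈ s, HasDerivWithinAt f (g x * h x) s x :=
    fun x hx ↦ (hf' x (hs hx)).hasDerivWithinAt
  refine ⟨m, hm, ?_, ?_⟩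
  · refine strictMonoOn_of_hasDerivWithinAt_pos (f' := fun x ↦ g x * h x) (convex_Icc a m)
      (hf.mono (Icc_subset_Icc_right hm.2.le)) ?_ ?_ <;> rw [interior_Icc]
    · exact hf'_within (Ioo_subset_Ioo_right hm.2.le)
    · intro x hx
      have hhx : 0 < h x := hm0 ▸ hh_anti ⟨hx.1.le, hx.2.le.trans hm.2.le⟩
        ⟨hm.1.le, hm.2.le⟩ hx.2
      exact mul_pos (hg x ⟨hx.1, hx.2.trans hm.2⟩) hhx
  · refine strictAntiOn_of_hasDerivWithinAt_neg (f' := fun x ↦ g x * h x) (convex_Icc m b)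
      (hf.mono (Icc_subset_Icc_left hm.1.le)) ?_ ?_ <;> rw [interior_Icc]
    · exact hf'_within (Ioo_subset_Ioo_left hm.1.le)
    · intro x hx
      have hhx : h x < 0 := hm0 ▸ hh_anti ⟨hm.1.le, hm.2.le⟩
        ⟨hm.1.le.trans hx.1.le, hx.2.le⟩ hx.1
      exact mul_neg_of_pos_of_neg (hg x ⟨hm.1.trans hx.1, hx.2⟩) hhx

noncomputable def supplierUtility (lam k c p w : ℝ) : ℝ :=
  lam * log (p / w) ^ (1 / k) * (w - c)

noncomputable def supplierMarginal (k c p w : ℝ) : ℝ :=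
  log (p / w) - (w - c) / (k * w)

theorem log_const_div_pos {p w : ℝ} (hw : 0 < w) (hwp : w < p) : 0 < log (p / w) :=
  log_pos ((one_lt_div hw).mpr hwp)

theorem hasDerivAt_log_const_div {p w : ℝ} (hp : p ≠ 0) (hw : w ≠ 0) :
    HasDerivAt (fun w ↦ log (p / w)) (-w⁻¹) w := by
  have := ((hasDerivAt_inv hw).const_mul p).log (div_ne_zero hp hw)
  convert this using 1
  · ext; simp [div_eq_mul_inv]
  · field_simp

theorem strictAntiOn_supplierMarginal {k c p : ℝ} (hk : 0 < k) (hc : 0 ≤ c) (hp : 0 < p) :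
    StrictAntiOn (supplierMarginal k c p) (Ioi 0) := by
  intro x (hx : 0 < x) y (hy : 0 < y) hxy
  have hlog : log x < log y := log_lt_log hx hxy
  have hdiv : c / (k * y) ≤ c / (k * x) := by gcongr
  have hsplit (w : ℝ) (hw : w ≠ 0) :
      supplierMarginal k c p w = log p - log w - 1 / k + c / (k * w) := by
    rw [supplierMarginal, log_div hp.ne' hw]
    field_simp
    ring
  rw [hsplit x hx.ne', hsplit y hy.ne']
  linarith

theorem continuousOn_supplierMarginal {k c p : ℝ} (hk : k ≠ 0) (hp : p ≠ 0) :
    ContinuousOn (supplierMarginal k c p) (Ioi 0) := by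
  unfold supplierMarginal
  fun_prop (disch := intros; simp_all [ne_of_gt])

theorem hasDerivAt_supplierUtility {lam k c p w : ℝ} (hw : 0 < w) (hwp : w < p) :
    HasDerivAt (supplierUtility lam k c p)
      (lam * log (p / w) ^ (1 / k - 1) * supplierMarginal k c p w) w := by
  have hL : 0 < log (p / w) := log_const_div_pos hw hwp
  refine ((((hasDerivAt_log_const_div (hw.trans hwp).ne' hw.ne').rpow_const
    (p := 1 / k) (Or.inl hL.ne')).const_mul lam).mul
      ((hasDerivAt_id w).sub_const c)).congr_deriv ?_
  rw [supplierMarginal, rpow_sub_one hL.ne']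
  field_simp
  simp only [id, div_eq_mul_inv]
  ring

theorem continuousOn_supplierUtility {lam k c p : ℝ} (hk : 0 ≤ k) (hc : 0 < c) (hp : p ≠ 0) :
    ContinuousOn (supplierUtility lam k c p) (Ici c) := by
  have hpos : ∀ w ∈ Ici c, w ≠ 0 := fun w hw ↦ (hc.trans_le hw).ne'
  have hlog : ContinuousOn (fun w ↦ log (p / w)) (Ici c) :=
    (continuousOn_const.div continuousOn_id hpos).log fun w hw ↦ div_ne_zero hp (hpos w hw)
  exact (continuousOn_const.mul (hlog.rpow_const fun _ _ ↦ Or.inr (by positivity))).mul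
    (continuousOn_id.sub continuousOn_const)

theorem supplierMarginal_left {k c p : ℝ} (hc : 0 < c) (hcp : c < p) :
    0 < supplierMarginal k c p c := by
  simpa [supplierMarginal] using log_const_div_pos hc hcp

theorem supplierMarginal_right {k c p : ℝ} (hk : 0 < k) (hp : 0 < p) (hcp : c < p) :
    supplierMarginal k c p p < 0 := by
  have : 0 < (p - c) / (k * p) := div_pos (sub_pos.mpr hcp) (by positivity)
  simpa [supplierMarginal, div_self hp.ne'] using this

theorem stmt_6 (c p lam k : ℝ) (hc : 0 < c) (hcp : c < p)
    (hlam : 0 < lam) (hk : 1 ≤ k)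
    (u : ℝ → ℝ)
    (hu : ∀ w, u w = lam * (Real.log (p / w)) ^ ((1:ℝ) / k) * (w - c)) :
    ∃ ws ∈ Set.Ioo c p, IsMaxOn u (Set.Ioo c p) ws ∧
      ∀ w ∈ Set.Ioo c p, IsMaxOn u (Set.Ioo c p) w → w = ws := by
  obtain rfl : u = supplierUtility lam k c p := funext hu
  have hk0 : 0 < k := one_pos.trans_le hk
  have hp : 0 < p := hc.trans hcp
  have hIcc : Icc c p ⊆ Ioi 0 := fun w hw ↦ hc.trans_le hw.1
  obtain ⟨ws, hws, hmono, hanti⟩ := exists_strictMonoOn_strictAntiOn_of_hasDerivAt_mul hcp.le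
    ((continuousOn_supplierUtility hk0.le hc hp.ne').mono Icc_subset_Ici_self)
    (fun w hw ↦ hasDerivAt_supplierUtility (hc.trans hw.1) hw.2)
    (fun w hw ↦ mul_pos hlam (rpow_pos_of_pos (log_const_div_pos (hc.trans hw.1) hw.2) _))
    ((continuousOn_supplierMarginal hk0.ne' hp.ne').mono hIcc)
    ((strictAntiOn_supplierMarginal hk0 hc.le hp).mono hIcc)
    (supplierMarginal_left hc hcp) (supplierMarginal_right hk0 hp hcp)
  refine ⟨ws, hws, isMaxOn_and_unique_of_forall_ne_lt hws fun w hw ↦ ?_⟩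
  exact lt_of_strictMonoOn_Icc_of_strictAntiOn_Icc hmono hanti (Ioo_subset_Icc_self hw)
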